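/- Under the hypotheses of the invariance-under-twisting theorem (A ⊗_R B a twisted tensor product, A' a second algebra structure on A with the same unit, ρ : A' → A ⊗_R B an algebra map, λ : A → A ⊗ B with λ(1) = 1 ⊗ 1 satisfying λ(aa') = a_[0] * (a'_R)_[0] ⊗ (a'_R)_[1] (a_[1])_R, a_(0)[0] ⊗ a_(0)[1] a_(1) = a ⊗ 1, and a_[0](0) ⊗ a_[0](1) a_[1] = a ⊗ 1), the linear map A' ⊗_{R'} B → A ⊗_R B defined by a ⊗ b ↦ a_(0) ⊗ a_(1) b is an algebra isomorphism, where R'(b ⊗ a) = ((a_(0))_R)_[0] ⊗ ((a_(0))_R)_[1] b_R a_(1). -/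

import Mathlib

open TensorProduct LinearMap

noncomputable section
namespace IUT

variable {k : Type*} [Field k]

section Twisting
variable {A B : Type*} [AddCommGroup A] [Module k A] [AddCommGroup B] [Module k B]

/-- The twisted-tensor-product multiplication map on `A ⊗ B` determined by
multiplications `mA`, `mB` and a linear map `R : B ⊗ A →ₗ A ⊗ B`. -/
def mulOf (mA : A ⊗[k] A →ₗ[k] A) (mB : B ⊗[k] B →ₗ[k] B)
    (R : B ⊗[k] A →ₗ[k] A ⊗[k] B) :
    (A ⊗[k] B) ⊗[k] (A ⊗[k] B) →ₗ[k] A ⊗[k] B :=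
  TensorProduct.map mA mB
    ∘ₗ (TensorProduct.assoc k A A (B ⊗[k] B)).symm.toLinearMap
    ∘ₗ TensorProduct.map LinearMap.id
        ((TensorProduct.assoc k A B B).toLinearMap
          ∘ₗ TensorProduct.map R LinearMap.id
          ∘ₗ (TensorProduct.assoc k B A B).symm.toLinearMap)
    ∘ₗ (TensorProduct.assoc k A B (A ⊗[k] B)).toLinearMap

/-- The axioms of a twisting map, relative to multiplications `mA`, `mB`
with units `uA`, `uB`. -/
def IsTwistingMapMul (mA : A ⊗[k] A →ₗ[k] A) (uA : A)
    (mB : B ⊗[k] B →ₗ[k] B) (uB : B)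
    (R : B ⊗[k] A →ₗ[k] A ⊗[k] B) : Prop :=
  (∀ b : B, R (b ⊗ₜ[k] uA) = uA ⊗ₜ[k] b) ∧
  (∀ a : A, R (uB ⊗ₜ[k] a) = a ⊗ₜ[k] uB) ∧
  (R ∘ₗ TensorProduct.map LinearMap.id mA =
    TensorProduct.map mA LinearMap.id
      ∘ₗ (TensorProduct.assoc k A A B).symm.toLinearMap
      ∘ₗ TensorProduct.map LinearMap.id R
      ∘ₗ (TensorProduct.assoc k A B A).toLinearMap
      ∘ₗ TensorProduct.map R LinearMap.id
      ∘ₗ (TensorProduct.assoc k B A A).symm.toLinearMap) ∧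
  (R ∘ₗ TensorProduct.map mB LinearMap.id =
    TensorProduct.map LinearMap.id mB
      ∘ₗ (TensorProduct.assoc k A B B).toLinearMap
      ∘ₗ TensorProduct.map R LinearMap.id
      ∘ₗ (TensorProduct.assoc k B A B).symm.toLinearMap
      ∘ₗ TensorProduct.map LinearMap.id R
      ∘ₗ (TensorProduct.assoc k B B A).toLinearMap)

/-- The new twisting map `R'` of the invariance-under-twisting theorem:
`R'(b ⊗ a) = ((a₍₀₎)_R)_[0] ⊗ ((a₍₀₎)_R)_[1] · b_R · a₍₁₎`. -/
def twistPrime (mB : B ⊗[k] B →ₗ[k] B) (R : B ⊗[k] A →ₗ[k] A ⊗[k] B)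
    (ρ lam : A →ₗ[k] A ⊗[k] B) : B ⊗[k] A →ₗ[k] A ⊗[k] B :=
  TensorProduct.map LinearMap.id (mB ∘ₗ TensorProduct.map LinearMap.id mB)
    ∘ₗ (TensorProduct.assoc k A B (B ⊗[k] B)).toLinearMap
    ∘ₗ (TensorProduct.assoc k (A ⊗[k] B) B B).toLinearMap
    ∘ₗ TensorProduct.map (TensorProduct.map lam LinearMap.id) LinearMap.id
    ∘ₗ TensorProduct.map R LinearMap.id
    ∘ₗ (TensorProduct.assoc k B A B).symm.toLinearMap
    ∘ₗ TensorProduct.map LinearMap.id ρ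

/-- The right-hand side of condition (4.7):
`a ⊗ a' ↦ a_[0] * (a'_R)_[0] ⊗ (a'_R)_[1] (a_[1])_R`. -/
def lamMulMap (st : A ⊗[k] A →ₗ[k] A) (mB : B ⊗[k] B →ₗ[k] B)
    (R : B ⊗[k] A →ₗ[k] A ⊗[k] B) (lam : A →ₗ[k] A ⊗[k] B) :
    A ⊗[k] A →ₗ[k] A ⊗[k] B :=
  TensorProduct.map st mB
    ∘ₗ (TensorProduct.assoc k A A (B ⊗[k] B)).symm.toLinearMap
    ∘ₗ TensorProduct.map LinearMap.id (TensorProduct.assoc k A B B).toLinearMap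
    ∘ₗ TensorProduct.map LinearMap.id (TensorProduct.map lam LinearMap.id)
    ∘ₗ TensorProduct.map LinearMap.id R
    ∘ₗ (TensorProduct.assoc k A B A).toLinearMap
    ∘ₗ TensorProduct.map lam LinearMap.id

/-- `a ↦ a₍₀₎_[0] ⊗ a₍₀₎_[1] · a₍₁₎` : apply `g` to the first leg of `f` and
multiply the `B`-legs; used in conditions (4.8)/(4.9). -/
def sweedlerContract (mB : B ⊗[k] B →ₗ[k] B) (f g : A →ₗ[k] A ⊗[k] B) :
    A →ₗ[k] A ⊗[k] B :=
  TensorProduct.map LinearMap.id mB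
    ∘ₗ (TensorProduct.assoc k A B B).toLinearMap
    ∘ₗ TensorProduct.map g LinearMap.id
    ∘ₗ f

end Twisting

/-- The twisting-map axioms for two algebras with their ring multiplications. -/
def IsTwistingMap {A B : Type*} [Ring A] [Algebra k A] [Ring B] [Algebra k B]
    (R : B ⊗[k] A →ₗ[k] A ⊗[k] B) : Prop :=
  IsTwistingMapMul (LinearMap.mul' k A) (1 : A) (LinearMap.mul' k B) (1 : B) R

/-! The map `T` is `extendRight ρ : a ⊗ b ↦ ρ(a)·(1 ⊗ b)`, the right `B`-linear extension of `ρ`,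
and conditions (4.8)/(4.9) say exactly that `extendRight lam` is a two-sided inverse of it.

For multiplicativity, the product in `A' ⊗_{R'} B` is `(a ⊗ b)(a' ⊗ b') = (a ·' R'(b ⊗ a'))(1 ⊗ b')`.
The twisting map `R'` is `extendRight lam` applied to `(1 ⊗ b)·ρ(a')`, so by (4.9)
`T(R'(b ⊗ a')) = (1 ⊗ b)·ρ(a')`, while multiplicativity of `ρ` gives `T((a ⊗ 1) ·' t) = ρ(a)·T(t)`.
What is left, `(ρ(a)(1 ⊗ b))·(ρ(a')(1 ⊗ b')) = ρ(a)·((1 ⊗ b)ρ(a')(1 ⊗ b'))`, is associativity of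
`A ⊗_R B` in the special form `(z(1 ⊗ b))w = z((1 ⊗ b)w)`, a consequence of the twisting axiom
`R(bc ⊗ a) = (1 ⊗ b)·R(c ⊗ a)`. -/

section Module
variable {A B : Type*} [AddCommGroup A] [Module k A] [Ring B] [Algebra k B]

theorem lTensor_mulRight_mul (b c : B) (z : A ⊗[k] B) :
    lTensor A (mulRight k (b * c)) z = lTensor A (mulRight k c) (lTensor A (mulRight k b) z) := by
  rw [mulRight_mul, lTensor_comp, comp_apply]

theorem mulOf_tmul_tmul (m : A ⊗[k] A →ₗ[k] A) (R : B ⊗[k] A →ₗ[k] A ⊗[k] B)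
    (a a' : A) (b b' : B) :
    mulOf m (mul' k B) R ((a ⊗ₜ[k] b) ⊗ₜ[k] (a' ⊗ₜ[k] b')) =
      lTensor A (mulRight k b') (rTensor B (m ∘ₗ mk k A A a) (R (b ⊗ₜ[k] a'))) := by
  simp only [mulOf, coe_comp, Function.comp_apply, LinearEquiv.coe_coe, assoc_tmul,
    assoc_symm_tmul, map_tmul, id_coe, id_eq]
  induction R (b ⊗ₜ[k] a') using TensorProduct.induction_on with
  | zero => simp
  | tmul x y => simp [mul'_apply]
  | add u v hu hv => simp only [add_tmul, tmul_add, map_add, hu, hv]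

theorem mulOf_tmul_lTensor_mulRight (m : A ⊗[k] A →ₗ[k] A) (R : B ⊗[k] A →ₗ[k] A ⊗[k] B)
    (z w : A ⊗[k] B) (c : B) :
    mulOf m (mul' k B) R (z ⊗ₜ[k] lTensor A (mulRight k c) w) =
      lTensor A (mulRight k c) (mulOf m (mul' k B) R (z ⊗ₜ[k] w)) := by
  induction z using TensorProduct.induction_on with
  | zero => simp
  | tmul a b =>
    induction w using TensorProduct.induction_on with
    | zero => simp
    | tmul a' b' =>
      rw [lTensor_tmul, mulRight_apply, mulOf_tmul_tmul, mulOf_tmul_tmul, lTensor_mulRight_mul]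
    | add u v hu hv => simp only [map_add, tmul_add, hu, hv]
  | add u v hu hv => simp only [map_add, add_tmul, hu, hv]

theorem map_id_mul'_assoc_tmul (t : A ⊗[k] B) (c : B) :
    map id (mul' k B) (TensorProduct.assoc k A B B (t ⊗ₜ[k] c)) = lTensor A (mulRight k c) t := by
  induction t using TensorProduct.induction_on with
  | zero => simp
  | tmul x y => simp [mul'_apply]
  | add u v hu hv => simp only [add_tmul, map_add, hu, hv]

def extendRight (f : A →ₗ[k] A ⊗[k] B) : A ⊗[k] B →ₗ[k] A ⊗[k] B :=
  map id (mul' k B) ∘ₗ (TensorProduct.assoc k A B B).toLinearMap ∘ₗ map f id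

theorem extendRight_apply_tmul (f : A →ₗ[k] A ⊗[k] B) (a : A) (b : B) :
    extendRight f (a ⊗ₜ[k] b) = lTensor A (mulRight k b) (f a) :=
  map_id_mul'_assoc_tmul (f a) b

theorem extendRight_lTensor_mulRight (f : A →ₗ[k] A ⊗[k] B) (c : B) (z : A ⊗[k] B) :
    extendRight f (lTensor A (mulRight k c) z) = lTensor A (mulRight k c) (extendRight f z) := by
  induction z using TensorProduct.induction_on with
  | zero => simp
  | tmul a b =>
    rw [lTensor_tmul, mulRight_apply, extendRight_apply_tmul, extendRight_apply_tmul,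
      lTensor_mulRight_mul]
  | add u v hu hv => simp only [map_add, hu, hv]

theorem sweedlerContract_eq (f g : A →ₗ[k] A ⊗[k] B) :
    sweedlerContract (mul' k B) f g = extendRight g ∘ₗ f :=
  rfl

theorem extendRight_leftInverse {f g : A →ₗ[k] A ⊗[k] B}
    (h : ∀ a : A, sweedlerContract (mul' k B) f g a = a ⊗ₜ[k] (1 : B)) :
    Function.LeftInverse (extendRight g) (extendRight f) := by
  intro z
  induction z using TensorProduct.induction_on with
  | zero => simp
  | tmul a b =>
    rw [extendRight_apply_tmul, extendRight_lTensor_mulRight, ← comp_apply (extendRight g),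
      ← sweedlerContract_eq, h, lTensor_tmul, mulRight_apply, one_mul]
  | add u v hu hv => simp only [map_add, hu, hv]

end Module

section Algebra
variable {A B : Type*} [Ring A] [Algebra k A] [Ring B] [Algebra k B]

theorem mul'_comp_mk (a : A) : mul' k A ∘ₗ mk k A A a = mulLeft k a := by
  ext
  simp [mul'_apply]

theorem mulOf_one_tmul_tmul (R : B ⊗[k] A →ₗ[k] A ⊗[k] B) (b b' : B) (a' : A) :
    mulOf (mul' k A) (mul' k B) R (((1 : A) ⊗ₜ[k] b) ⊗ₜ[k] (a' ⊗ₜ[k] b')) =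
      lTensor A (mulRight k b') (R (b ⊗ₜ[k] a')) := by
  rw [mulOf_tmul_tmul, mul'_comp_mk, mulLeft_one, rTensor_id, id_apply]

theorem mulOf_tmul_eq_rTensor (R : B ⊗[k] A →ₗ[k] A ⊗[k] B) (a : A) (b : B) (w : A ⊗[k] B) :
    mulOf (mul' k A) (mul' k B) R ((a ⊗ₜ[k] b) ⊗ₜ[k] w) =
      rTensor B (mulLeft k a) (mulOf (mul' k A) (mul' k B) R (((1 : A) ⊗ₜ[k] b) ⊗ₜ[k] w)) := by
  induction w using TensorProduct.induction_on with
  | zero => simp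
  | tmul a' b' =>
    rw [mulOf_one_tmul_tmul, mulOf_tmul_tmul, mul'_comp_mk, ← comp_apply (lTensor A _),
      ← comp_apply (rTensor B _), lTensor_comp_rTensor, rTensor_comp_lTensor]
  | add u v hu hv => simp only [map_add, tmul_add, hu, hv]

theorem IsTwistingMap.apply_mul_tmul {R : B ⊗[k] A →ₗ[k] A ⊗[k] B} (hR : IsTwistingMap R)
    (b c : B) (a : A) :
    R ((b * c) ⊗ₜ[k] a) = mulOf (mul' k A) (mul' k B) R (((1 : A) ⊗ₜ[k] b) ⊗ₜ[k] R (c ⊗ₜ[k] a)) := by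
  have h := LinearMap.congr_fun hR.2.2.2 ((b ⊗ₜ[k] c) ⊗ₜ[k] a)
  simp only [coe_comp, Function.comp_apply, map_tmul, mul'_apply, id_coe, id_eq,
    LinearEquiv.coe_coe, assoc_tmul] at h
  rw [h]
  induction R (c ⊗ₜ[k] a) using TensorProduct.induction_on with
  | zero => simp
  | tmul a' c' =>
    rw [assoc_symm_tmul, map_tmul, id_apply, mulOf_one_tmul_tmul, map_id_mul'_assoc_tmul]
  | add u v hu hv => simp only [map_add, tmul_add, hu, hv]

theorem IsTwistingMap.mulOf_one_tmul_mul {R : B ⊗[k] A →ₗ[k] A ⊗[k] B} (hR : IsTwistingMap R)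
    (b c : B) (w : A ⊗[k] B) :
    mulOf (mul' k A) (mul' k B) R (((1 : A) ⊗ₜ[k] (b * c)) ⊗ₜ[k] w) =
      mulOf (mul' k A) (mul' k B) R (((1 : A) ⊗ₜ[k] b) ⊗ₜ[k]
        mulOf (mul' k A) (mul' k B) R (((1 : A) ⊗ₜ[k] c) ⊗ₜ[k] w)) := by
  induction w using TensorProduct.induction_on with
  | zero => simp
  | tmul a q =>
    rw [mulOf_one_tmul_tmul, hR.apply_mul_tmul, ← mulOf_tmul_lTensor_mulRight,
      mulOf_one_tmul_tmul]
  | add u v hu hv => simp only [map_add, tmul_add, hu, hv]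

theorem IsTwistingMap.mulOf_lTensor_mulRight_tmul {R : B ⊗[k] A →ₗ[k] A ⊗[k] B}
    (hR : IsTwistingMap R) (b : B) (z w : A ⊗[k] B) :
    mulOf (mul' k A) (mul' k B) R (lTensor A (mulRight k b) z ⊗ₜ[k] w) =
      mulOf (mul' k A) (mul' k B) R (z ⊗ₜ[k]
        mulOf (mul' k A) (mul' k B) R (((1 : A) ⊗ₜ[k] b) ⊗ₜ[k] w)) := by
  induction z using TensorProduct.induction_on with
  | zero => simp
  | tmul a c =>
    rw [lTensor_tmul, mulRight_apply, mulOf_tmul_eq_rTensor, hR.mulOf_one_tmul_mul,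
      ← mulOf_tmul_eq_rTensor]
  | add u v hu hv => simp only [map_add, add_tmul, hu, hv]

theorem twistPrime_apply_tmul (R : B ⊗[k] A →ₗ[k] A ⊗[k] B) (ρ lam : A →ₗ[k] A ⊗[k] B)
    (b : B) (a : A) :
    twistPrime (mul' k B) R ρ lam (b ⊗ₜ[k] a) =
      extendRight lam (mulOf (mul' k A) (mul' k B) R (((1 : A) ⊗ₜ[k] b) ⊗ₜ[k] ρ a)) := by
  simp only [twistPrime, coe_comp, Function.comp_apply, map_tmul, id_coe, id_eq,
    LinearEquiv.coe_coe]
  induction ρ a using TensorProduct.induction_on with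
  | zero => simp
  | tmul p q =>
    rw [assoc_symm_tmul, map_tmul, mulOf_one_tmul_tmul, extendRight_lTensor_mulRight]
    induction R (b ⊗ₜ[k] p) using TensorProduct.induction_on with
    | zero => simp
    | tmul x y =>
      rw [extendRight_apply_tmul, ← lTensor_mulRight_mul, map_tmul, map_tmul, assoc_tmul]
      generalize lam x = t
      induction t using TensorProduct.induction_on with
      | zero => simp
      | tmul u v => simp [mul_assoc]
      | add u v hu hv => simp only [map_add, add_tmul, hu, hv]
    | add u v hu hv => simp only [map_add, add_tmul, hu, hv]
  | add u v hu hv => simp only [map_add, tmul_add, hu, hv]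

theorem extendRight_rTensor {R : B ⊗[k] A →ₗ[k] A ⊗[k] B} {st : A →ₗ[k] A →ₗ[k] A}
    {ρ : A →ₗ[k] A ⊗[k] B}
    (hρ_mul : ∀ a a' : A, ρ (st a a') = mulOf (mul' k A) (mul' k B) R (ρ a ⊗ₜ[k] ρ a'))
    (a : A) (t : A ⊗[k] B) :
    extendRight ρ (rTensor B (st a) t) =
      mulOf (mul' k A) (mul' k B) R (ρ a ⊗ₜ[k] extendRight ρ t) := by
  induction t using TensorProduct.induction_on with
  | zero => simp
  | tmul u v =>
    rw [rTensor_tmul, extendRight_apply_tmul, extendRight_apply_tmul, hρ_mul,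
      mulOf_tmul_lTensor_mulRight]
  | add u v hu hv => simp only [map_add, tmul_add, hu, hv]

theorem extendRight_twistPrime_apply_tmul (R : B ⊗[k] A →ₗ[k] A ⊗[k] B)
    {ρ lam : A →ₗ[k] A ⊗[k] B}
    (hinv : ∀ a : A, sweedlerContract (mul' k B) lam ρ a = a ⊗ₜ[k] (1 : B)) (b : B) (a : A) :
    extendRight ρ (twistPrime (mul' k B) R ρ lam (b ⊗ₜ[k] a)) =
      mulOf (mul' k A) (mul' k B) R (((1 : A) ⊗ₜ[k] b) ⊗ₜ[k] ρ a) := by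
  rw [twistPrime_apply_tmul, extendRight_leftInverse hinv]

theorem extendRight_mulOf_twistPrime {R : B ⊗[k] A →ₗ[k] A ⊗[k] B} (hR : IsTwistingMap R)
    {st : A →ₗ[k] A →ₗ[k] A} {ρ lam : A →ₗ[k] A ⊗[k] B}
    (hρ_mul : ∀ a a' : A, ρ (st a a') = mulOf (mul' k A) (mul' k B) R (ρ a ⊗ₜ[k] ρ a'))
    (hinv : ∀ a : A, sweedlerContract (mul' k B) lam ρ a = a ⊗ₜ[k] (1 : B)) (x y : A ⊗[k] B) :
    extendRight ρ (mulOf (TensorProduct.lift st) (mul' k B)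
        (twistPrime (mul' k B) R ρ lam) (x ⊗ₜ[k] y)) =
      mulOf (mul' k A) (mul' k B) R (extendRight ρ x ⊗ₜ[k] extendRight ρ y) := by
  induction x using TensorProduct.induction_on with
  | zero => simp
  | tmul a b =>
    induction y using TensorProduct.induction_on with
    | zero => simp
    | tmul a' b' =>
      have hst : TensorProduct.lift st ∘ₗ mk k A A a = st a := by
        ext
        simp
      rw [mulOf_tmul_tmul, hst, extendRight_lTensor_mulRight, extendRight_rTensor hρ_mul,
        extendRight_twistPrime_apply_tmul R hinv, extendRight_apply_tmul, extendRight_apply_tmul,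
        hR.mulOf_lTensor_mulRight_tmul, mulOf_tmul_lTensor_mulRight, mulOf_tmul_lTensor_mulRight]
    | add u v hu hv => simp only [map_add, tmul_add, hu, hv]
  | add u v hu hv => simp only [map_add, add_tmul, hu, hv]

end Algebra

theorem twistPrime_algebra_iso_general
    {A B : Type*} [Ring A] [Algebra k A] [Ring B] [Algebra k B]
    (R : B ⊗[k] A →ₗ[k] A ⊗[k] B) (hR : IsTwistingMap R)
    (st : A →ₗ[k] A →ₗ[k] A)
    (ρ lam : A →ₗ[k] A ⊗[k] B)
    (hρ_one : ρ 1 = (1 : A) ⊗ₜ[k] (1 : B))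
    (hρ_mul : ∀ a a' : A, ρ (st a a') =
      mulOf (LinearMap.mul' k A) (LinearMap.mul' k B) R (ρ a ⊗ₜ[k] ρ a'))
    (h48 : ∀ a : A, sweedlerContract (LinearMap.mul' k B) ρ lam a = a ⊗ₜ[k] (1 : B))
    (h49 : ∀ a : A, sweedlerContract (LinearMap.mul' k B) lam ρ a = a ⊗ₜ[k] (1 : B))
    -- the map `T : a ⊗ b ↦ a₍₀₎ ⊗ a₍₁₎ b`
    (T : A ⊗[k] B →ₗ[k] A ⊗[k] B)
    (hT : T = TensorProduct.map LinearMap.id (LinearMap.mul' k B)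
        ∘ₗ (TensorProduct.assoc k A B B).toLinearMap
        ∘ₗ TensorProduct.map ρ LinearMap.id) :
    Function.Bijective T ∧
    T ((1 : A) ⊗ₜ[k] (1 : B)) = (1 : A) ⊗ₜ[k] (1 : B) ∧
    (∀ x y : A ⊗[k] B,
      T (mulOf (TensorProduct.lift st) (LinearMap.mul' k B)
          (twistPrime (LinearMap.mul' k B) R ρ lam) (x ⊗ₜ[k] y)) =
      mulOf (LinearMap.mul' k A) (LinearMap.mul' k B) R (T x ⊗ₜ[k] T y)) := by
  obtain rfl : T = extendRight ρ := hT
  refine ⟨⟨(extendRight_leftInverse h48).injective, (extendRight_leftInverse h49).surjective⟩,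
    ?_, extendRight_mulOf_twistPrime hR hρ_mul h49⟩
  rw [extendRight_apply_tmul, hρ_one, lTensor_tmul, mulRight_apply, one_mul]

/-- invariance under twisting, second part. Under the
hypotheses of the invariance-under-twisting theorem, the map
`a ⊗ b ↦ a₍₀₎ ⊗ a₍₁₎ b : A' ⊗_{R'} B → A ⊗_R B` is an algebra isomorphism. -/
theorem twistPrime_algebra_iso
    {A B : Type*} [Ring A] [Algebra k A] [Ring B] [Algebra k B]
    (R : B ⊗[k] A →ₗ[k] A ⊗[k] B) (hR : IsTwistingMap R)
    (st : A →ₗ[k] A →ₗ[k] A)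
    (hst_one : ∀ a : A, st 1 a = a) (hst_one' : ∀ a : A, st a 1 = a)
    (hst_assoc : ∀ a b c : A, st (st a b) c = st a (st b c))
    (ρ lam : A →ₗ[k] A ⊗[k] B)
    (hρ_one : ρ 1 = (1 : A) ⊗ₜ[k] (1 : B))
    (hρ_mul : ∀ a a' : A, ρ (st a a') =
      mulOf (LinearMap.mul' k A) (LinearMap.mul' k B) R (ρ a ⊗ₜ[k] ρ a'))
    (hlam_one : lam 1 = (1 : A) ⊗ₜ[k] (1 : B))
    (h47 : ∀ a a' : A, lam (a * a') =
      lamMulMap (TensorProduct.lift st) (LinearMap.mul' k B) R lam (a ⊗ₜ[k] a'))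
    (h48 : ∀ a : A, sweedlerContract (LinearMap.mul' k B) ρ lam a = a ⊗ₜ[k] (1 : B))
    (h49 : ∀ a : A, sweedlerContract (LinearMap.mul' k B) lam ρ a = a ⊗ₜ[k] (1 : B))
    -- the map `T : a ⊗ b ↦ a₍₀₎ ⊗ a₍₁₎ b`
    (T : A ⊗[k] B →ₗ[k] A ⊗[k] B)
    (hT : T = TensorProduct.map LinearMap.id (LinearMap.mul' k B)
        ∘ₗ (TensorProduct.assoc k A B B).toLinearMap
        ∘ₗ TensorProduct.map ρ LinearMap.id) :
    Function.Bijective T ∧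
    T ((1 : A) ⊗ₜ[k] (1 : B)) = (1 : A) ⊗ₜ[k] (1 : B) ∧
    (∀ x y : A ⊗[k] B,
      T (mulOf (TensorProduct.lift st) (LinearMap.mul' k B)
          (twistPrime (LinearMap.mul' k B) R ρ lam) (x ⊗ₜ[k] y)) =
      mulOf (LinearMap.mul' k A) (LinearMap.mul' k B) R (T x ⊗ₜ[k] T y)) :=
  twistPrime_algebra_iso_general R hR st ρ lam hρ_one hρ_mul h48 h49 T hT

end IUT
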